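/- arXiv:2604.20189 — 3 statements merged into one kernel-verified Lean document; each statement's English description precedes it below -/
import Mathlib

section
/- Let k ≥ 2 and let 0 < α₁ < α₂ < ⋯ < α_k be integers with gcd(α₁,…,α_k) = 1, and assume that αᵢ ≢ αⱼ (mod α₁) for all 1 ≤ i < j ≤ k. Then F(α₁,…,α_k) ≤ 2·α_k·⌊α₁/k⌋ − α₁; equivalently, every integer n > 2·α_k·⌊α₁/k⌋ − α₁ can be written as n = x₁α₁ + ⋯ + x_kα_k with x₁,…,x_k ∈ ℕ. -/
namespace ProjMonomialCurve

/-- The numerical semigroup generated by `a 1, …, a k` (equivalently by `A₁ = {0,a 1,…,a k}`). -/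
def S1 (k : ℕ) (a : ℕ → ℕ) : Set ℕ :=
  {n | ∃ x : ℕ → ℕ, n = ∑ i ∈ Finset.Icc 1 k, x i * a i}

/-- The numerical semigroup generated by the nonzero elements `d - a i` (`0 ≤ i ≤ k-1`)
of `A₂`, where `d = a k`. -/
def S2 (k : ℕ) (a : ℕ → ℕ) : Set ℕ :=
  {n | ∃ x : ℕ → ℕ, n = ∑ i ∈ Finset.range k, x i * (a k - a i)}

/-- `δ₁ n`: least total number of summands over representations `n = ∑ xᵢ aᵢ`. -/
noncomputable def delta1 (k : ℕ) (a : ℕ → ℕ) (n : ℕ) : ℕ :=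
  sInf {m | ∃ x : ℕ → ℕ, n = ∑ i ∈ Finset.Icc 1 k, x i * a i ∧ m = ∑ i ∈ Finset.Icc 1 k, x i}

/-- `δ₂ n`: least total number of summands over representations of `n` by the
nonzero elements of `A₂`. -/
noncomputable def delta2 (k : ℕ) (a : ℕ → ℕ) (n : ℕ) : ℕ :=
  sInf {m | ∃ x : ℕ → ℕ,
    n = ∑ i ∈ Finset.range k, x i * (a k - a i) ∧ m = ∑ i ∈ Finset.range k, x i}

/-- `ω₁ i`: the least element of `S₍₁₎` congruent to `i` modulo `d = a k`. -/
noncomputable def omega1 (k : ℕ) (a : ℕ → ℕ) (i : ℕ) : ℕ :=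
  sInf {n | n ∈ S1 k a ∧ n % a k = i % a k}

/-- `ω₂ i`: the least element of `S₍₂₎` congruent to `i` modulo `d = a k`. -/
noncomputable def omega2 (k : ℕ) (a : ℕ → ℕ) (i : ℕ) : ℕ :=
  sInf {n | n ∈ S2 k a ∧ n % a k = i % a k}

/-- `w i = (ω₁(i), ω₂(d-i))`. -/
noncomputable def w (k : ℕ) (a : ℕ → ℕ) (i : ℕ) : ℕ × ℕ :=
  (omega1 k a i, omega2 k a (a k - i))

/-- `e h = (h, d - h)`. -/
def e (k : ℕ) (a : ℕ → ℕ) (h : ℕ) : ℕ × ℕ := (h, a k - h)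

/-- The affine semigroup `S ⊆ ℕ²` generated by `e (a 0), …, e (a k)`. -/
def S (k : ℕ) (a : ℕ → ℕ) : Set (ℕ × ℕ) :=
  {u | ∃ x : ℕ → ℕ, u = ∑ i ∈ Finset.range (k+1), x i • e k a (a i)}

/-- `S' = {u ∈ ℕ² | u + p•e₀ ∈ S and u + p•e_d ∈ S for some p ∈ ℕ}`. -/
def S' (k : ℕ) (a : ℕ → ℕ) : Set (ℕ × ℕ) :=
  {u | ∃ p : ℕ, u + p • e k a 0 ∈ S k a ∧ u + p • e k a (a k) ∈ S k a}

/-- `deg u = (u₁ + u₂)/d` for `u ∈ ℕ²`. -/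
def deg (k : ℕ) (a : ℕ → ℕ) (u : ℕ × ℕ) : ℕ := (u.1 + u.2) / a k

/-- The index set `𝕀`. -/
noncomputable def II (k : ℕ) (a : ℕ → ℕ) : Set ℕ :=
  {i | 1 ≤ i ∧ i ≤ a k - 1 ∧ (∀ j, 1 ≤ j → j ≤ k - 1 → i ≠ a j) ∧
    deg k a (w k a i) < delta1 k a (w k a i).1}

/-- `T = {u ∈ ℤ² | d ∣ u₁+u₂, u₁ ∉ S₍₁₎, u₂ ∉ S₍₂₎}`. -/
def T (k : ℕ) (a : ℕ → ℕ) : Set (ℤ × ℤ) :=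
  {u | (a k : ℤ) ∣ u.1 + u.2 ∧ (∀ n ∈ S1 k a, (n : ℤ) ≠ u.1) ∧ (∀ n ∈ S2 k a, (n : ℤ) ≠ u.2)}

/-- `deg` for integer points. -/
def degZ (k : ℕ) (a : ℕ → ℕ) (u : ℤ × ℤ) : ℤ := (u.1 + u.2) / (a k : ℤ)

/-- The Castelnuovo–Mumford regularity, expressed combinatorially:
`max({deg u + 1 : u ∈ S'∖S} ∪ {deg u + 2 : u ∈ T})`. -/
noncomputable def reg (k : ℕ) (a : ℕ → ℕ) : ℤ :=
  sSup ({z : ℤ | ∃ u ∈ S' k a \ S k a, z = (deg k a u : ℤ) + 1} ∪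
        {z : ℤ | ∃ u ∈ T k a, z = degZ k a u + 2})

/-- Frobenius number of `S₍₁₎` (greatest integer not in it; `-1` if the semigroup is all of `ℕ`). -/
noncomputable def F1 (k : ℕ) (a : ℕ → ℕ) : ℤ :=
  sSup {z : ℤ | ∀ n ∈ S1 k a, (n : ℤ) ≠ z}

/-- Frobenius number of `S₍₂₎`. -/
noncomputable def F2 (k : ℕ) (a : ℕ → ℕ) : ℤ :=
  sSup {z : ℤ | ∀ n ∈ S2 k a, (n : ℤ) ≠ z}

/-- The largest gap `λ_max = max_{1 ≤ i ≤ k} (a i - a (i-1) - 1)`. -/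
def lamMax (k : ℕ) (a : ℕ → ℕ) : ℕ :=
  (Finset.Icc 1 k).sup (fun i => a i - a (i-1) - 1)

/-- The second largest gap: the minimum over `i` of the largest gap among indices `≠ i`. -/
noncomputable def lamSl (k : ℕ) (a : ℕ → ℕ) : ℕ :=
  sInf {m | ∃ i, 1 ≤ i ∧ i ≤ k ∧
    m = ((Finset.Icc 1 k).erase i).sup (fun j => a j - a (j-1) - 1)}

/-- The set `A₁ = {a 0, a 1, …, a k}`. -/
def A1set (k : ℕ) (a : ℕ → ℕ) : Set ℕ := {m | ∃ j ≤ k, a j = m}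

/-!
Reduce modulo `α 1`: the residues of `α 1, …, α k` form a `k`-element set `B ∋ 0` generating
`ZMod (α 1)`. Olson's inequality `2|X| + |B| ≤ 2|X + B|` (for `X + B ≠ univ`) follows from
Hamidoune's isoperimetric method: a fragment of minimal size among those with minimal boundary
(an atom) may be translated to contain `0`, and is then a subgroup, which `B` escapes. Iterating
it, the `q`-fold sumset with `q = ⌊α 1 / k⌋` has more than `α 1 / 2` elements, so the `2q`-fold
sumset is all of `ZMod (α 1)`. Hence every residue class contains a sum of `2q` generators, which is
at most `2q · α k`, and adding multiples of `α 1` reaches every larger `n` of that class.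
-/

open Finset
open scoped Pointwise

lemma card_inter_add_add_card_union_add_le {α : Type*} [DecidableEq α] [Add α] (X Y C : Finset α) :
    #((X ∩ Y) + C) + #((X ∪ Y) + C) ≤ #(X + C) + #(Y + C) := by
  rw [union_add, ← card_union_add_card_inter (X + C)]
  have := card_le_card (inter_add_subset (s₁ := X) (s₂ := Y) (t := C))
  omega

namespace Isoperimetric

variable {G : Type*} [AddCommGroup G] [Fintype G] [DecidableEq G] {C X Y : Finset G}

def IsFragment (C X : Finset G) : Prop := X.Nonempty ∧ X + C ≠ univ

noncomputable def connectivity (C : Finset G) : ℕ :=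
  sInf {n | ∃ X, IsFragment C X ∧ #(X + C) = #X + n}

def IsAtom (C X : Finset G) : Prop := IsFragment C X ∧ #(X + C) = #X + connectivity C

noncomputable def atomSize (C : Finset G) : ℕ :=
  sInf {n | ∃ X, IsAtom C X ∧ #X = n}

lemma connectivity_le {n : ℕ} (hX : IsFragment C X) (h : #(X + C) = #X + n) :
    connectivity C ≤ n :=
  Nat.sInf_le ⟨X, hX, h⟩

lemma card_add_connectivity_le (h0 : (0 : G) ∈ C) (hX : IsFragment C X) :
    #X + connectivity C ≤ #(X + C) := by
  have hsub := card_le_card (subset_add_left X h0)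
  have := connectivity_le hX (n := #(X + C) - #X) (by omega)
  omega

lemma exists_isAtom (h0 : (0 : G) ∈ C) (hC : C ≠ univ) : ∃ X, IsAtom C X := by
  have hfrag : IsFragment C {0} := ⟨singleton_nonempty 0, by rwa [singleton_zero, zero_add]⟩
  have hsub := card_le_card (subset_add_left {0} h0)
  exact Nat.sInf_mem (s := {n | ∃ X, IsFragment C X ∧ #(X + C) = #X + n})
    ⟨_, {0}, hfrag, (Nat.add_sub_of_le hsub).symm⟩

lemma exists_isAtom_card_eq_atomSize (h0 : (0 : G) ∈ C) (hC : C ≠ univ) :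
    ∃ X, IsAtom C X ∧ #X = atomSize C := by
  obtain ⟨X, hX⟩ := exists_isAtom h0 hC
  exact Nat.sInf_mem (s := {n | ∃ X, IsAtom C X ∧ #X = n}) ⟨_, X, hX, rfl⟩

lemma atomSize_le (hX : IsAtom C X) : atomSize C ≤ #X :=
  Nat.sInf_le ⟨X, hX, rfl⟩

lemma IsAtom.vadd (hX : IsAtom C X) (g : G) : IsAtom C (g +ᵥ X) := by
  obtain ⟨⟨hne, hXC⟩, hcard⟩ := hX
  refine ⟨⟨hne.vadd_finset, ?_⟩, ?_⟩
  · rwa [vadd_add_assoc, Ne, vadd_finset_eq_univ]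
  · rwa [vadd_add_assoc, card_vadd_finset, card_vadd_finset]

lemma compl_add_neg_subset (X C : Finset G) : (X + C)ᶜ + -C ⊆ Xᶜ := by
  intro a ha
  obtain ⟨y, hy, c, hc, rfl⟩ := mem_add.1 ha
  rw [mem_compl] at hy ⊢
  intro hX
  apply hy
  have := add_mem_add hX (by simpa using hc : -c ∈ C)
  rwa [add_neg_cancel_right] at this

lemma IsFragment.compl_add (hX : IsFragment C X) : IsFragment (-C) (X + C)ᶜ := by
  refine ⟨nonempty_iff_ne_empty.2 ((compl_eq_empty_iff _).not.2 hX.2), fun h => ?_⟩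
  have := compl_add_neg_subset X C
  rw [h, univ_subset_iff, compl_eq_univ_iff] at this
  exact hX.1.ne_empty this

lemma card_compl_add_neg_add_card_le (X C : Finset G) :
    #((X + C)ᶜ + -C) + #X ≤ Fintype.card G := by
  have hsub := card_le_card (compl_add_neg_subset X C)
  have := card_le_univ X
  rw [card_compl] at hsub
  omega

lemma neg_ne_univ (hC : C ≠ univ) : -C ≠ univ := by
  rwa [Ne, ← neg_inj, neg_neg, neg_univ]

lemma connectivity_neg_le (h0 : (0 : G) ∈ C) (hC : C ≠ univ) :
    connectivity (-C) ≤ connectivity C := by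
  obtain ⟨X, hX, hXC⟩ := exists_isAtom h0 hC
  have := card_add_connectivity_le (C := -C) (by simpa using h0) hX.compl_add
  have := card_compl_add_neg_add_card_le X C
  have := card_le_univ (X + C)
  rw [card_compl] at *
  omega

lemma connectivity_neg (h0 : (0 : G) ∈ C) (hC : C ≠ univ) :
    connectivity (-C) = connectivity C := by
  have h0' : (0 : G) ∈ -C := by simpa using h0
  have := connectivity_neg_le h0' (neg_ne_univ hC)
  rw [neg_neg] at this
  exact (connectivity_neg_le h0 hC).antisymm this

lemma IsAtom.compl_add (h0 : (0 : G) ∈ C) (hC : C ≠ univ) (hX : IsAtom C X) :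
    IsAtom (-C) (X + C)ᶜ := by
  have hlow := card_add_connectivity_le (C := -C) (by simpa using h0) hX.1.compl_add
  have hup := card_compl_add_neg_add_card_le X C
  have := card_le_univ (X + C)
  have := hX.2
  rw [connectivity_neg h0 hC, card_compl] at hlow
  exact ⟨hX.1.compl_add, by rw [card_compl, connectivity_neg h0 hC]; omega⟩

lemma two_mul_atomSize_add_connectivity_le (h0 : (0 : G) ∈ C) (hC : C ≠ univ)
    (hmin : atomSize C ≤ atomSize (-C)) :
    2 * atomSize C + connectivity C ≤ Fintype.card G := by
  obtain ⟨X, hX, hXc⟩ := exists_isAtom_card_eq_atomSize h0 hC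
  have := atomSize_le (hX.compl_add h0 hC)
  have := card_le_univ (X + C)
  have := hX.2
  rw [card_compl] at *
  omega

lemma IsAtom.eq_of_inter_nonempty (h0 : (0 : G) ∈ C) (hC : C ≠ univ)
    (hmin : atomSize C ≤ atomSize (-C)) (hX : IsAtom C X) (hXc : #X = atomSize C)
    (hY : IsAtom C Y) (hYc : #Y = atomSize C) (hXY : (X ∩ Y).Nonempty) : X = Y := by
  -- By submodularity of `X ↦ #(X + C)`, `X ∩ Y` is an atom as soon as `X ∪ Y` is a fragment,
  -- and `X ∪ Y + C = univ` would contradict `two_mul_atomSize_add_connectivity_le`.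
  have hsub := card_inter_add_add_card_union_add_le X Y C
  have hinter : IsFragment C (X ∩ Y) :=
    ⟨hXY, fun h => hX.1.2 (univ_subset_iff.1 (h ▸ add_subset_add_right inter_subset_left))⟩
  have hinter_card := card_add_connectivity_le h0 hinter
  have hunion : IsFragment C (X ∪ Y) := by
    refine ⟨hXY.mono inter_subset_union, fun h => ?_⟩
    have := two_mul_atomSize_add_connectivity_le h0 hC hmin
    have := hXY.card_pos
    have := hX.2
    have := hY.2
    rw [h, card_univ] at hsub
    omega
  have := card_add_connectivity_le h0 hunion
  have := card_union_add_card_inter X Y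
  have := card_le_card (subset_union_left (s₁ := X) (s₂ := Y))
  have : atomSize C ≤ #(X ∩ Y) := atomSize_le ⟨hinter, by have := hX.2; have := hY.2; omega⟩
  have hXY_X : X ∩ Y = X := eq_of_subset_of_card_le inter_subset_left (by omega)
  have hXY_Y : X ∩ Y = Y := eq_of_subset_of_card_le inter_subset_right (by omega)
  rw [← hXY_X, hXY_Y]

lemma exists_isAtom_coe_eq_stabilizer (h0 : (0 : G) ∈ C) (hC : C ≠ univ)
    (hmin : atomSize C ≤ atomSize (-C)) :
    ∃ X, IsAtom C X ∧ (X : Set G) = AddAction.stabilizer G X := by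
  obtain ⟨X, hX, hXc⟩ := exists_isAtom_card_eq_atomSize h0 hC
  obtain ⟨x, hx⟩ := hX.1.1
  have hH : IsAtom C (-x +ᵥ X) := hX.vadd (-x)
  have hHc : #(-x +ᵥ X) = atomSize C := by rw [card_vadd_finset, hXc]
  have h0H : (0 : G) ∈ -x +ᵥ X := mem_vadd_finset.2 ⟨x, hx, neg_add_cancel x⟩
  refine ⟨_, hH, Set.ext fun g => ⟨fun hg => ?_, fun hg => ?_⟩⟩
  · have hgg : g ∈ g +ᵥ (-x +ᵥ X) := by simpa using vadd_mem_vadd_finset (a := g) h0H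
    exact (hH.vadd g).eq_of_inter_nonempty h0 hC hmin (by rw [card_vadd_finset, hHc]) hH hHc
      ⟨g, mem_inter.2 ⟨hgg, hg⟩⟩
  · have := vadd_mem_vadd_finset (a := g) h0H
    rwa [AddAction.mem_stabilizer_iff.1 hg, vadd_eq_add, add_zero] at this

lemma card_le_two_mul_connectivity_of_atomSize_le (h0 : (0 : G) ∈ C)
    (hgen : AddSubgroup.closure (C : Set G) = ⊤) (hC : C ≠ univ)
    (hmin : atomSize C ≤ atomSize (-C)) :
    #C ≤ 2 * connectivity C := by
  obtain ⟨H, hH, hHK⟩ := exists_isAtom_coe_eq_stabilizer h0 hC hmin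
  -- `H + C` contains the disjoint cosets `H` and `c +ᵥ H` for some `c ∈ C \ H`,
  -- so `#(H + C) - #H ≥ #(H + C) / 2 ≥ #C / 2`.
  set K := AddAction.stabilizer G H
  have h0H : (0 : G) ∈ H := by simpa [← SetLike.mem_coe, ← hHK] using K.zero_mem
  obtain ⟨c, hc, hcK⟩ : ∃ c ∈ C, c ∉ K := by
    by_contra! hCK
    have hK : K = ⊤ := top_le_iff.1 (hgen ▸ (AddSubgroup.closure_le K).2 hCK)
    refine hH.1.2 (eq_univ_of_forall fun g => subset_add_left H h0 ?_)
    simp [← mem_coe, hHK, hK]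
  have hdisj : Disjoint H (c +ᵥ H) := by
    refine disjoint_left.2 fun g hg hg' => hcK ?_
    obtain ⟨h, hh, rfl⟩ := mem_vadd_finset.1 hg'
    have h1 : c + h ∈ K := by simpa [← SetLike.mem_coe, ← hHK] using hg
    have h2 : h ∈ K := by simpa [← SetLike.mem_coe, ← hHK] using hh
    simpa using K.sub_mem h1 h2
  have hunion : H ∪ (c +ᵥ H) ⊆ H + C := by
    refine union_subset (subset_add_left H h0) fun g hg => ?_
    obtain ⟨h, hh, rfl⟩ := mem_vadd_finset.1 hg
    simpa [add_comm] using add_mem_add hh hc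
  have h2H := card_le_card hunion
  rw [card_union_of_disjoint hdisj, card_vadd_finset] at h2H
  have := card_le_card (subset_add_right C h0H)
  have := hH.2
  omega

lemma card_le_two_mul_connectivity (h0 : (0 : G) ∈ C)
    (hgen : AddSubgroup.closure (C : Set G) = ⊤) (hC : C ≠ univ) :
    #C ≤ 2 * connectivity C := by
  rcases le_total (atomSize C) (atomSize (-C)) with hmin | hmin
  · exact card_le_two_mul_connectivity_of_atomSize_le h0 hgen hC hmin
  · have := card_le_two_mul_connectivity_of_atomSize_le (C := -C) (by simpa using h0)
      (by rwa [coe_neg, AddSubgroup.closure_neg]) (neg_ne_univ hC) (by rwa [neg_neg])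
    rwa [card_neg, connectivity_neg h0 hC] at this

end Isoperimetric

section Sumsets

variable {G : Type*} [AddCommGroup G] [Fintype G] [DecidableEq G] {C : Finset G}

theorem two_mul_card_add_card_le_two_mul_card_add {X : Finset G} (h0 : (0 : G) ∈ C)
    (hgen : AddSubgroup.closure (C : Set G) = ⊤) (hX : X.Nonempty) (hXC : X + C ≠ univ) :
    2 * #X + #C ≤ 2 * #(X + C) := by
  obtain ⟨x, hx⟩ := hX
  have hC : C ≠ univ := by
    rintro rfl
    exact hXC (eq_univ_of_forall fun g =>
      mem_add.2 ⟨x, hx, g - x, mem_univ _, add_sub_cancel x g⟩)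
  have := Isoperimetric.card_add_connectivity_le h0 ⟨⟨x, hx⟩, hXC⟩
  have := Isoperimetric.card_le_two_mul_connectivity h0 hgen hC
  omega

lemma add_eq_univ_of_card_lt_card_add_card {X Y : Finset G}
    (h : Fintype.card G < #X + #Y) : X + Y = univ := by
  refine eq_univ_of_forall fun g => ?_
  have hY : #(g +ᵥ -Y) = #Y := by rw [card_vadd_finset, card_neg]
  obtain ⟨x, hx⟩ := inter_nonempty_of_card_lt_card_add_card (subset_univ X)
    (subset_univ (g +ᵥ -Y)) (by rwa [card_univ, hY])
  obtain ⟨hxX, hxY⟩ := mem_inter.1 hx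
  obtain ⟨_, hy, rfl⟩ := mem_vadd_finset.1 hxY
  exact mem_add.2 ⟨_, hxX, _, Finset.mem_neg'.1 hy, by simp⟩

lemma succ_mul_card_le_two_mul_card_nsmul (h0 : (0 : G) ∈ C)
    (hgen : AddSubgroup.closure (C : Set G) = ⊤) {j : ℕ} (hj : 1 ≤ j)
    (hjC : j • C ≠ univ) :
    (j + 1) * #C ≤ 2 * #(j • C) := by
  induction j, hj using Nat.le_induction with
  | base => simp
  | succ j hj ih =>
    have hjC' : j • C ≠ univ := fun h =>
      hjC (univ_subset_iff.1 (h ▸ nsmul_subset_nsmul_right h0 j.le_succ))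
    have := two_mul_card_add_card_le_two_mul_card_add h0 hgen ⟨0, zero_mem_nsmul h0⟩
      (by rwa [← succ_nsmul])
    rw [← succ_nsmul] at this
    linarith [ih hjC']

theorem two_mul_card_div_card_nsmul_eq_univ (h0 : (0 : G) ∈ C)
    (hgen : AddSubgroup.closure (C : Set G) = ⊤) :
    (2 * (Fintype.card G / #C)) • C = univ := by
  have hCpos : 0 < #C := card_pos.2 ⟨0, h0⟩
  set q := Fintype.card G / #C
  have hq : 1 ≤ q := (Nat.one_le_div_iff hCpos).2 (card_le_univ C)
  by_cases hqC : q • C = univ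
  · exact univ_subset_iff.1 (hqC ▸ nsmul_subset_nsmul_right h0 (by omega))
  · have h1 := succ_mul_card_le_two_mul_card_nsmul h0 hgen hq hqC
    have h2 : Fintype.card G < #C * (q + 1) := Nat.lt_mul_div_succ (Fintype.card G) hCpos
    rw [two_mul, add_nsmul]
    exact add_eq_univ_of_card_lt_card_add_card (by linarith)

end Sumsets

lemma exists_sum_eq_of_mem_nsmul_image {ι M : Type*} [AddCommMonoid M] [DecidableEq ι]
    [DecidableEq M] (s : Finset ι) (v : ι → M) {n : ℕ} {x : M} (hx : x ∈ n • s.image v) :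
    ∃ y : ι → ℕ, ∑ i ∈ s, y i = n ∧ ∑ i ∈ s, y i • v i = x := by
  induction n generalizing x with
  | zero => exact ⟨0, by simp, by simp_all⟩
  | succ n ih =>
    rw [succ_nsmul] at hx
    obtain ⟨z, hz, _, hb, rfl⟩ := mem_add.1 hx
    obtain ⟨i, hi, rfl⟩ := mem_image.1 hb
    obtain ⟨y, hy, rfl⟩ := ih hz
    refine ⟨y + Pi.single i 1, ?_, ?_⟩
    · simp [sum_add_distrib, hy, hi]
    · simp [add_smul, sum_add_distrib, Pi.single_apply, ite_smul, hi]

lemma closure_image_natCast_eq_top {ι : Type*} (s : Finset ι) (a : ι → ℕ) (m : ℕ)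
    (h : s.gcd a = 1) :
    AddSubgroup.closure ((s.image fun i => (a i : ZMod m)) : Set (ZMod m)) = ⊤ := by
  classical
  have hcast : ∀ t : Finset ι, t.gcd (fun i => (a i : ℤ)) = t.gcd a := by
    intro t
    induction t using Finset.induction_on with
    | empty => simp
    | insert i t _ ih =>
      rw [gcd_insert, gcd_insert, ih, ← Int.coe_gcd, Int.gcd_natCast_natCast]
      rfl
  obtain ⟨g, hg⟩ := s.gcd_eq_sum_mul fun i => (a i : ℤ)
  rw [hcast, h, Nat.cast_one] at hg
  have h1 : (1 : ZMod m) ∈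
      AddSubgroup.closure ((s.image fun i => (a i : ZMod m)) : Set (ZMod m)) := by
    have := congrArg (Int.cast : ℤ → ZMod m) hg
    push_cast at this
    rw [this]
    refine AddSubgroup.sum_mem _ fun i hi => ?_
    rw [mul_comm, ← zsmul_eq_mul]
    exact AddSubgroup.zsmul_mem _ (AddSubgroup.subset_closure (mem_coe.2 (mem_image_of_mem _ hi))) _
  refine (AddSubgroup.eq_top_iff' _).2 fun x => ?_
  rw [← ZMod.intCast_zmod_cast x, ← zsmul_one]
  exact AddSubgroup.zsmul_mem _ h1 _

lemma exists_eq_sum_of_intCast_eq {ι : Type*} [DecidableEq ι] {s : Finset ι} {a : ι → ℕ}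
    {j : ι} (hj : j ∈ s) (y : ι → ℕ) {n : ℤ} (hn : ∑ i ∈ s, y i • (a i : ZMod (a j)) = n)
    (hlt : ∑ i ∈ s, (y i : ℤ) * a i - a j < n) :
    ∃ x : ι → ℕ, n = ∑ i ∈ s, (x i : ℤ) * a i := by
  have hcast : ((∑ i ∈ s, (y i : ℤ) * a i : ℤ) : ZMod (a j)) = n := by
    push_cast
    simpa [nsmul_eq_mul] using hn
  obtain ⟨z, hz⟩ := (ZMod.intCast_eq_intCast_iff_dvd_sub _ _ _).1 hcast
  have hz0 : 0 ≤ z := by nlinarith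
  lift z to ℕ using hz0
  refine ⟨y + Pi.single j z, ?_⟩
  simp [add_mul, sum_add_distrib, Pi.single_apply, hj]
  linarith

lemma card_image_natCast_Icc {m k : ℕ} {a : ℕ → ℕ}
    (h : ∀ i j, 1 ≤ i → i < j → j ≤ k → a i % m ≠ a j % m) :
    #((Icc 1 k).image fun i => (a i : ZMod m)) = k := by
  rw [card_image_of_injOn, Nat.card_Icc, Nat.add_sub_cancel]
  intro i hi j hj hij
  simp only [coe_Icc, Set.mem_Icc, ZMod.natCast_eq_natCast_iff'] at hi hj hij
  by_contra hne
  rcases Nat.lt_or_gt_of_ne hne with hlt | hlt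
  · exact h i j hi.1 hlt hj.2 hij
  · exact h j i hj.1 hlt hi.2 hij.symm

theorem statement_0_general (k : ℕ) (α : ℕ → ℕ) (hpos : 0 < α 1)
    (hmono : ∀ i, 1 ≤ i → i < k → α i < α (i+1))
    (hgcd : (Finset.Icc 1 k).gcd α = 1)
    (hmod : ∀ i j, 1 ≤ i → i < j → j ≤ k → α i % α 1 ≠ α j % α 1) :
    ∀ n : ℤ, 2 * (α k : ℤ) * ((α 1 / k : ℕ) : ℤ) - (α 1 : ℤ) < n →
      ∃ x : ℕ → ℕ, n = ∑ i ∈ Finset.Icc 1 k, (x i : ℤ) * (α i : ℤ) := by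
  intro n hn
  have : NeZero (α 1) := ⟨hpos.ne'⟩
  have hk : 1 ≤ k := Nat.one_le_iff_ne_zero.2 (by rintro rfl; simp at hgcd)
  have h1 : 1 ∈ Icc 1 k := mem_Icc.2 ⟨le_rfl, hk⟩
  set B := (Icc 1 k).image fun i => (α i : ZMod (α 1))
  have h0 : (0 : ZMod (α 1)) ∈ B := mem_image.2 ⟨1, h1, ZMod.natCast_self _⟩
  have huniv := two_mul_card_div_card_nsmul_eq_univ h0 (closure_image_natCast_eq_top _ _ _ hgcd)
  rw [ZMod.card, card_image_natCast_Icc hmod] at huniv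
  obtain ⟨y, hy, hyn⟩ :=
    exists_sum_eq_of_mem_nsmul_image _ _ (huniv ▸ mem_univ (n : ZMod (α 1)))
  have hα : MonotoneOn α (Set.Icc 1 k) := monotoneOn_of_le_add_one Set.ordConnected_Icc
    fun i _ hi hi1 => (hmono i hi.1 hi1.2).le
  have hαk : ∀ i ∈ Icc 1 k, α i ≤ α k := fun i hi =>
    hα (by simpa using hi) (by simp [hk]) (mem_Icc.1 hi).2
  have hN : ∑ i ∈ Icc 1 k, (y i : ℤ) * α i ≤ 2 * α k * (α 1 / k : ℕ) := calc
    _ ≤ ∑ i ∈ Icc 1 k, (y i : ℤ) * α k := sum_le_sum fun i hi => by gcongr; exact hαk i hi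
    _ = _ := by rw [← sum_mul, ← Nat.cast_sum, hy]; push_cast; ring
  exact exists_eq_sum_of_intCast_eq h1 y hyn (by linarith)

theorem statement_0 (k : ℕ) (α : ℕ → ℕ) (hk : 2 ≤ k) (hpos : 0 < α 1)
    (hmono : ∀ i, 1 ≤ i → i < k → α i < α (i+1))
    (hgcd : (Finset.Icc 1 k).gcd α = 1)
    (hmod : ∀ i j, 1 ≤ i → i < j → j ≤ k → α i % α 1 ≠ α j % α 1) :
    ∀ n : ℤ, 2 * (α k : ℤ) * ((α 1 / k : ℕ) : ℤ) - (α 1 : ℤ) < n →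
      ∃ x : ℕ → ℕ, n = ∑ i ∈ Finset.Icc 1 k, (x i : ℤ) * (α i : ℤ) :=
  statement_0_general k α hpos hmono hgcd hmod

end ProjMonomialCurve
end

section
/- 𝕀 = {i : 1 ≤ i ≤ d−1, i ∉ {a₁,…,a_{k−1}}, δ₂(w_i) > deg(w_i)}, and {w_i : i ∈ 𝕀} ⊆ S′∖S ⊆ {w_i + n·e₀ + m·e_d : i ∈ 𝕀, n, m ∈ ℕ}. -/
namespace ProjMonomialCurve

/-!
`S` consists of the `u` with `d ∣ u₁ + u₂` whose first coordinate is a sum of at most `deg u` of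
the `aᵢ`: the generator `e₀ = (0, d)` pads a shorter sum. Symmetrically for the second coordinate,
`S₍₂₎` and `e_d`. Hence `S'` is the set of `u` with `d ∣ u₁ + u₂`, `u₁ ∈ S₍₁₎` and `u₂ ∈ S₍₂₎`, and
for such `u` both `δ₁(u) ≤ deg u` and `δ₂(u) ≤ deg u` are equivalent to `u ∈ S`.
Every `u ∈ S'` is `w_i + n e₀ + m e_d` with `i = u₁ mod d`, and `w_i ∉ S` whenever `u ∉ S`; this
rules out `i = 0` and `i = a_j`, for which `w_i` is `0`, resp. `e_{a_j}`.
-/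

open Finset

section FinSpan

variable {ι M : Type*} [AddCommMonoid M]

def finSpan (s : Finset ι) (v : ι → M) : AddSubmonoid M where
  carrier := {u | ∃ x : ι → ℕ, u = ∑ i ∈ s, x i • v i}
  add_mem' := by
    rintro _ _ ⟨x, rfl⟩ ⟨y, rfl⟩
    exact ⟨x + y, by simp only [Pi.add_apply, add_smul, sum_add_distrib]⟩
  zero_mem' := ⟨0, by simp⟩

theorem mem_finSpan_of_mem {s : Finset ι} {v : ι → M} {i : ι} (hi : i ∈ s) :
    v i ∈ finSpan s v := by
  classical
  exact ⟨Pi.single i 1, by simp [Pi.single_apply, hi]⟩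

theorem map_mem_finSpan {N : Type*} [AddCommMonoid N] (f : M →+ N) {s : Finset ι} {v : ι → M}
    {u : M} (hu : u ∈ finSpan s v) : f u ∈ finSpan s (f ∘ v) := by
  obtain ⟨x, rfl⟩ := hu
  exact ⟨x, by simp [map_sum, map_nsmul]⟩

theorem swap_mem_finSpan_iff {s : Finset ι} {v : ι → ℕ × ℕ} {u : ℕ × ℕ} :
    u.swap ∈ finSpan s (fun i ↦ (v i).swap) ↔ u ∈ finSpan s v :=
  let swap : ℕ × ℕ →+ ℕ × ℕ := (AddEquiv.prodComm : ℕ × ℕ ≃+ ℕ × ℕ).toAddMonoidHom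
  ⟨fun h ↦ by simpa [swap, Function.comp_def] using map_mem_finSpan swap h, map_mem_finSpan swap⟩

theorem fst_add_snd_sum_smul {s : Finset ι} {g h : ι → ℕ} {d : ℕ}
    (hgh : ∀ i ∈ s, g i + h i = d) (x : ι → ℕ) :
    (∑ i ∈ s, x i • (g i, h i)).1 + (∑ i ∈ s, x i • (g i, h i)).2 = (∑ i ∈ s, x i) * d := by
  simp only [Prod.fst_sum, Prod.snd_sum, Prod.smul_mk, smul_eq_mul, ← sum_add_distrib, ← mul_add,
    sum_mul]
  exact sum_congr rfl fun i hi ↦ by rw [hgh i hi]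

/-- The generator indexed by `i₀` lies on the second axis, so it pads any representation of the
first coordinate up to the prescribed number `c` of summands. -/
theorem mem_finSpan_pair_iff [DecidableEq ι] {s : Finset ι} {i₀ : ι} (hi₀ : i₀ ∉ s)
    {g h : ι → ℕ} {d : ℕ} (hgh : ∀ i ∈ insert i₀ s, g i + h i = d) (hg₀ : g i₀ = 0) {u : ℕ × ℕ} :
    u ∈ finSpan (insert i₀ s) (fun i ↦ (g i, h i)) ↔
      ∃ c, u.1 + u.2 = c * d ∧ ∃ x : ι → ℕ, u.1 = ∑ i ∈ s, x i * g i ∧ ∑ i ∈ s, x i ≤ c := by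
  have fst_sum (x : ι → ℕ) :
      (∑ i ∈ insert i₀ s, x i • (g i, h i)).1 = ∑ i ∈ s, x i * g i := by
    simp [Prod.fst_sum, sum_insert hi₀, hg₀]
  constructor
  · rintro ⟨x, rfl⟩
    refine ⟨_, fst_add_snd_sum_smul hgh x, x, fst_sum x, ?_⟩
    rw [sum_insert hi₀]
    exact Nat.le_add_left _ _
  · rintro ⟨c, hc, x, hx, hxc⟩
    set y := Function.update x i₀ (c - ∑ i ∈ s, x i)
    have hys : ∀ i ∈ s, y i = x i := fun i hi ↦
      Function.update_of_ne (ne_of_mem_of_not_mem hi hi₀) _ _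
    have hy_sum : ∑ i ∈ insert i₀ s, y i = c := by
      rw [sum_insert hi₀, sum_congr rfl hys, show y i₀ = _ from Function.update_self ..]
      exact Nat.sub_add_cancel hxc
    have hy_fst : (∑ i ∈ insert i₀ s, y i • (g i, h i)).1 = u.1 := by
      rw [fst_sum, hx]
      exact sum_congr rfl fun i hi ↦ by rw [hys i hi]
    have hy_snd : u.1 + (∑ i ∈ insert i₀ s, y i • (g i, h i)).2 = u.1 + u.2 := by
      rw [hc, ← hy_sum, ← hy_fst]
      exact fst_add_snd_sum_smul hgh y
    exact ⟨y, Prod.ext hy_fst.symm (by simpa using hy_snd.symm)⟩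

end FinSpan

theorem exists_le_iff_sInf_le {α : Type*} (P : α → Prop) (f : α → ℕ) (c : ℕ) :
    (∃ x, P x ∧ f x ≤ c) ↔ (∃ x, P x) ∧ sInf {m | ∃ x, P x ∧ m = f x} ≤ c := by
  constructor
  · rintro ⟨x, hx, hc⟩
    have hx' : f x ∈ {m | ∃ x, P x ∧ m = f x} := ⟨x, hx, rfl⟩
    exact ⟨⟨x, hx⟩, (Nat.sInf_le hx').trans hc⟩
  · rintro ⟨⟨x, hx⟩, hc⟩
    obtain ⟨y, hy, hm⟩ := Nat.sInf_mem (⟨_, x, hx, rfl⟩ : Set.Nonempty {m | ∃ x, P x ∧ m = f x})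
    exact ⟨y, hy, hm ▸ hc⟩

theorem exists_mem_modEq_of_setGcd_eq_one {P : AddSubmonoid ℕ} {s : Set ℕ}
    (hs : Nat.setGcd s = 1) {d : ℕ} (hd : 0 < d) (h : ∀ n ∈ s, ∃ m ∈ P, m ≡ n [MOD d]) (i : ℕ) :
    ∃ m ∈ P, m ≡ i [MOD d] := by
  let f := Nat.castAddMonoidHom (ZMod d)
  have hclosure : AddSubmonoid.closure s ≤ (P.map f).comap f :=
    AddSubmonoid.closure_le.mpr fun n hn ↦ by
      obtain ⟨m, hm, hmn⟩ := h n hn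
      exact ⟨m, hm, (ZMod.natCast_eq_natCast_iff _ _ _).mpr hmn⟩
  obtain ⟨N, hN⟩ := Nat.exists_mem_closure_of_ge s
  obtain ⟨m, hm, hmi⟩ :=
    hclosure (hN (i + N * d) (le_add_left (Nat.le_mul_of_pos_right N hd)) (hs ▸ one_dvd _))
  refine ⟨m, hm, (ZMod.natCast_eq_natCast_iff _ _ _).mp ?_⟩
  simpa [f] using hmi

noncomputable def leastModEq (P : Set ℕ) (d i : ℕ) : ℕ :=
  sInf {n | n ∈ P ∧ n % d = i % d}

section LeastModEq

variable {P : Set ℕ} {d i : ℕ}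

theorem leastModEq_spec (h : ∃ n ∈ P, n ≡ i [MOD d]) :
    leastModEq P d i ∈ P ∧ leastModEq P d i ≡ i [MOD d] :=
  Nat.sInf_mem h

theorem exists_eq_leastModEq_add_mul {n : ℕ} (hn : n ∈ P) (hni : n ≡ i [MOD d]) :
    ∃ t, n = leastModEq P d i + t * d := by
  have hle : leastModEq P d i ≤ n := Nat.sInf_le ⟨hn, hni⟩
  have hmod : leastModEq P d i ≡ n [MOD d] := (leastModEq_spec ⟨n, hn, hni⟩).2.trans hni.symm
  obtain ⟨t, ht⟩ := (Nat.modEq_iff_dvd' hle).mp hmod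
  exact ⟨t, by rw [mul_comm, ← ht, Nat.add_sub_cancel' hle]⟩

theorem leastModEq_eq_mod (h : i % d ∈ P) : leastModEq P d i = i % d := by
  have hmin := leastModEq_spec (P := P) ⟨i % d, h, Nat.mod_modEq i d⟩
  refine le_antisymm (Nat.sInf_le ⟨h, Nat.mod_modEq i d⟩) ?_
  calc i % d = leastModEq P d i % d := hmin.2.symm
    _ ≤ leastModEq P d i := Nat.mod_le _ _

end LeastModEq

theorem exists_eq_mul_and_iff {n d : ℕ} (hd : 0 < d) (hdvd : d ∣ n) {P : ℕ → Prop} :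
    (∃ c, n = c * d ∧ P c) ↔ P (n / d) := by
  obtain ⟨c, rfl⟩ := hdvd
  rw [Nat.mul_div_cancel_left c hd]
  constructor
  · rintro ⟨c', hc', hP⟩
    rwa [Nat.eq_of_mul_eq_mul_left hd (hc'.trans (mul_comm _ _))]
  · exact fun hP ↦ ⟨c, mul_comm _ _, hP⟩

section Curve

variable {k : ℕ} {a : ℕ → ℕ}

theorem S_eq_finSpan : S k a = (finSpan (range (k + 1)) fun i ↦ e k a (a i) : Set (ℕ × ℕ)) :=
  rfl

theorem e_mem_S {j : ℕ} (hj : j ≤ k) : e k a (a j) ∈ S k a :=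
  mem_finSpan_of_mem (v := fun i ↦ e k a (a i)) (mem_range.mpr (Nat.lt_succ_of_le hj))

theorem add_nsmul_e_mem_S (ha0 : a 0 = 0) {u : ℕ × ℕ} (hu : u ∈ S k a) (n m : ℕ) :
    u + n • e k a 0 + m • e k a (a k) ∈ S k a := by
  have he0 : e k a 0 ∈ S k a := ha0 ▸ e_mem_S (Nat.zero_le k)
  rw [S_eq_finSpan, SetLike.mem_coe] at hu he0 ⊢
  exact add_mem (add_mem hu (nsmul_mem he0 n)) (nsmul_mem (e_mem_S le_rfl) m)

theorem mem_S_iff_fst (ha0 : a 0 = 0) (hle : ∀ i ≤ k, a i ≤ a k) {u : ℕ × ℕ} :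
    u ∈ S k a ↔ ∃ c, u.1 + u.2 = c * a k ∧ u.1 ∈ S1 k a ∧ delta1 k a u.1 ≤ c := by
  have hrange : range (k + 1) = insert 0 (Icc 1 k) := by
    ext i
    simp only [mem_range, mem_insert, mem_Icc]
    omega
  have hS : S k a = finSpan (insert 0 (Icc 1 k)) (fun i ↦ (a i, a k - a i)) := by
    rw [← hrange]
    rfl
  have hgh : ∀ i ∈ insert 0 (Icc 1 k), a i + (a k - a i) = a k := fun i hi ↦
    Nat.add_sub_cancel' (hle i (by rw [← hrange, mem_range] at hi; omega))
  rw [hS, SetLike.mem_coe, mem_finSpan_pair_iff (by simp) hgh ha0]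
  exact exists_congr fun c ↦ and_congr_right fun _ ↦ exists_le_iff_sInf_le _ _ c

theorem mem_S_iff_snd (hle : ∀ i ≤ k, a i ≤ a k) {u : ℕ × ℕ} :
    u ∈ S k a ↔ ∃ c, u.1 + u.2 = c * a k ∧ u.2 ∈ S2 k a ∧ delta2 k a u.2 ≤ c := by
  have hgh : ∀ i ∈ insert k (range k), a k - a i + a i = a k := fun i hi ↦
    Nat.sub_add_cancel (hle i (by rw [← range_add_one, mem_range] at hi; omega))
  calc u ∈ S k a
      ↔ u.swap ∈ finSpan (insert k (range k)) (fun i ↦ (a k - a i, a i)) := by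
        rw [← range_add_one]
        exact (swap_mem_finSpan_iff (v := fun i ↦ (a i, a k - a i))).symm
    _ ↔ _ := mem_finSpan_pair_iff (by simp) hgh (Nat.sub_self _)
    _ ↔ _ := exists_congr fun c ↦ by
        rw [Prod.fst_swap, Prod.snd_swap, add_comm]
        exact and_congr_right fun _ ↦ exists_le_iff_sInf_le _ _ c

theorem mem_S_iff_delta1_le_deg (ha0 : a 0 = 0) (hle : ∀ i ≤ k, a i ≤ a k) (hd : 0 < a k)
    {u : ℕ × ℕ} (hdvd : a k ∣ u.1 + u.2) :
    u ∈ S k a ↔ u.1 ∈ S1 k a ∧ delta1 k a u.1 ≤ deg k a u := by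
  rw [mem_S_iff_fst ha0 hle, exists_eq_mul_and_iff hd hdvd]
  rfl

theorem mem_S_iff_delta2_le_deg (hle : ∀ i ≤ k, a i ≤ a k) (hd : 0 < a k)
    {u : ℕ × ℕ} (hdvd : a k ∣ u.1 + u.2) :
    u ∈ S k a ↔ u.2 ∈ S2 k a ∧ delta2 k a u.2 ≤ deg k a u := by
  rw [mem_S_iff_snd hle, exists_eq_mul_and_iff hd hdvd]
  rfl

theorem mem_S'_iff (ha0 : a 0 = 0) (hle : ∀ i ≤ k, a i ≤ a k) {u : ℕ × ℕ} :
    u ∈ S' k a ↔ a k ∣ u.1 + u.2 ∧ u.1 ∈ S1 k a ∧ u.2 ∈ S2 k a := by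
  have he0 : e k a 0 = (0, a k) := by simp [e]
  have hed : e k a (a k) = (a k, 0) := by simp [e]
  simp only [S', Set.mem_ofPred_eq, he0, hed]
  constructor
  · rintro ⟨p, hp0, hpd⟩
    obtain ⟨c, hc, h1, -⟩ := (mem_S_iff_fst ha0 hle).mp hp0
    obtain ⟨-, -, h2, -⟩ := (mem_S_iff_snd hle).mp hpd
    simp only [Prod.fst_add, Prod.snd_add, Prod.smul_mk, smul_eq_mul, mul_zero, add_zero]
      at hc h1 h2
    refine ⟨(Nat.dvd_add_left (dvd_mul_left (a k) p)).mp ⟨c, ?_⟩, h1, h2⟩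
    rw [add_assoc, hc, mul_comm]
  · rintro ⟨⟨c, hc⟩, h1, h2⟩
    set p := delta1 k a u.1 + delta2 k a u.2
    have hsum : u.1 + u.2 + p * a k = (c + p) * a k := by rw [hc]; ring
    refine ⟨p, (mem_S_iff_fst ha0 hle).mpr ⟨c + p, ?_, ?_⟩, (mem_S_iff_snd hle).mpr ⟨c + p, ?_, ?_⟩⟩
    all_goals simp only [Prod.fst_add, Prod.snd_add, Prod.smul_mk, smul_eq_mul, mul_zero, add_zero]
    · rw [← hsum, add_assoc]
    · exact ⟨h1, by omega⟩
    · rw [← hsum, add_right_comm]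
    · exact ⟨h2, by omega⟩

theorem omega1_eq_leastModEq : omega1 k a = leastModEq (S1 k a) (a k) :=
  rfl

theorem omega2_eq_leastModEq : omega2 k a = leastModEq (S2 k a) (a k) :=
  rfl

theorem setGcd_image_Icc_eq_one (hgcd : (Icc 1 k).gcd a = 1) :
    Nat.setGcd (a '' ↑(Icc 1 k)) = 1 := by
  have := Finset.dvd_gcd (s := Icc 1 k) (f := a) fun j hj ↦
    Nat.setGcd_dvd_of_mem (Set.mem_image_of_mem a (Finset.mem_coe.mpr hj))
  rwa [hgcd, Nat.dvd_one] at this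

theorem omega1_spec (hd : 0 < a k) (hgcd : (Icc 1 k).gcd a = 1) (i : ℕ) :
    omega1 k a i ∈ S1 k a ∧ omega1 k a i ≡ i [MOD a k] :=
  leastModEq_spec <| exists_mem_modEq_of_setGcd_eq_one (P := finSpan (Icc 1 k) a)
    (setGcd_image_Icc_eq_one hgcd) hd
    (fun _ ⟨j, hj, hjn⟩ ↦ ⟨a j, mem_finSpan_of_mem hj, hjn ▸ Nat.ModEq.refl _⟩) i

/-- Modulo `d`, the generator `d - a j` of `S₍₂₎` is `-a j`, so `(d - 1) • (d - a j) ≡ a j`. -/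
theorem omega2_spec (hle : ∀ i ≤ k, a i ≤ a k) (hd : 0 < a k) (hgcd : (Icc 1 k).gcd a = 1)
    (i : ℕ) : omega2 k a i ∈ S2 k a ∧ omega2 k a i ≡ i [MOD a k] := by
  refine leastModEq_spec <| exists_mem_modEq_of_setGcd_eq_one
    (P := finSpan (range k) fun j ↦ a k - a j) (setGcd_image_Icc_eq_one hgcd) hd ?_ i
  rintro _ ⟨j, hj, rfl⟩
  obtain ⟨hj1, hjk⟩ := mem_Icc.mp hj
  rcases hjk.lt_or_eq with hjk | rfl
  · refine ⟨(a k - 1) * (a k - a j),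
      nsmul_mem (mem_finSpan_of_mem (v := fun j ↦ a k - a j) (mem_range.mpr hjk)) _, ?_⟩
    rw [← ZMod.natCast_eq_natCast_iff]
    push_cast [Nat.cast_sub hd, Nat.cast_sub (hle j hjk.le), ZMod.natCast_self]
    ring
  · exact ⟨0, zero_mem _, (Nat.modEq_zero_iff_dvd.mpr dvd_rfl).symm⟩

theorem w_mem_S' (ha0 : a 0 = 0) (hle : ∀ i ≤ k, a i ≤ a k) (hd : 0 < a k)
    (hgcd : (Icc 1 k).gcd a = 1) {i : ℕ} (hi : i ≤ a k) : w k a i ∈ S' k a := by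
  obtain ⟨h1, hi1⟩ := omega1_spec hd hgcd i
  obtain ⟨h2, hi2⟩ := omega2_spec hle hd hgcd (a k - i)
  refine (mem_S'_iff ha0 hle).mpr ⟨Nat.modEq_zero_iff_dvd.mp ?_, h1, h2⟩
  calc omega1 k a i + omega2 k a (a k - i) ≡ i + (a k - i) [MOD a k] := hi1.add hi2
    _ = a k := Nat.add_sub_cancel' hi
    _ ≡ 0 [MOD a k] := Nat.modEq_zero_iff_dvd.mpr dvd_rfl

theorem w_mem_S_iff_delta1 (ha0 : a 0 = 0) (hle : ∀ i ≤ k, a i ≤ a k) (hd : 0 < a k)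
    (hgcd : (Icc 1 k).gcd a = 1) {i : ℕ} (hi : i ≤ a k) :
    w k a i ∈ S k a ↔ delta1 k a (w k a i).1 ≤ deg k a (w k a i) := by
  obtain ⟨hdvd, h1, -⟩ := (mem_S'_iff ha0 hle).mp (w_mem_S' ha0 hle hd hgcd hi)
  rw [mem_S_iff_delta1_le_deg ha0 hle hd hdvd, and_iff_right h1]

theorem w_mem_S_iff_delta2 (ha0 : a 0 = 0) (hle : ∀ i ≤ k, a i ≤ a k) (hd : 0 < a k)
    (hgcd : (Icc 1 k).gcd a = 1) {i : ℕ} (hi : i ≤ a k) :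
    w k a i ∈ S k a ↔ delta2 k a (w k a i).2 ≤ deg k a (w k a i) := by
  obtain ⟨hdvd, -, h2⟩ := (mem_S'_iff ha0 hle).mp (w_mem_S' ha0 hle hd hgcd hi)
  rw [mem_S_iff_delta2_le_deg hle hd hdvd, and_iff_right h2]

theorem w_zero : w k a 0 = 0 := by
  have h1 : omega1 k a 0 = 0 := by
    rw [omega1_eq_leastModEq, leastModEq_eq_mod] <;> rw [Nat.zero_mod]
    exact zero_mem (finSpan _ _)
  have h2 : omega2 k a (a k) = 0 := by
    rw [omega2_eq_leastModEq, leastModEq_eq_mod] <;> rw [Nat.mod_self]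
    exact zero_mem (finSpan _ _)
  simp [w, h1, h2]

theorem w_a_eq_e {j : ℕ} (hj : 1 ≤ j) (hjk : j < k) (ha : 0 < a j) (had : a j < a k) :
    w k a (a j) = e k a (a j) := by
  have h1 : omega1 k a (a j) = a j := by
    rw [omega1_eq_leastModEq, leastModEq_eq_mod] <;> rw [Nat.mod_eq_of_lt had]
    exact mem_finSpan_of_mem (mem_Icc.mpr ⟨hj, hjk.le⟩)
  have h2 : omega2 k a (a k - a j) = a k - a j := by
    rw [omega2_eq_leastModEq, leastModEq_eq_mod] <;> rw [Nat.mod_eq_of_lt (by omega)]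
    exact mem_finSpan_of_mem (v := fun i ↦ a k - a i) (mem_range.mpr hjk)
  simp [w, e, h1, h2]

theorem exists_eq_w_add_nsmul (ha0 : a 0 = 0) (hle : ∀ i ≤ k, a i ≤ a k) (hd : 0 < a k)
    {u : ℕ × ℕ} (hu : u ∈ S' k a) :
    ∃ i < a k, ∃ n m : ℕ, u = w k a i + n • e k a 0 + m • e k a (a k) := by
  obtain ⟨hdvd, h1, h2⟩ := (mem_S'_iff ha0 hle).mp hu
  set i := u.1 % a k
  have hi : i < a k := Nat.mod_lt _ hd
  have h2i : u.2 ≡ a k - i [MOD a k] := by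
    refine Nat.ModEq.add_right_cancel' i ?_
    calc u.2 + i ≡ u.2 + u.1 [MOD a k] := Nat.ModEq.add_left _ (Nat.mod_modEq _ _)
      _ ≡ 0 [MOD a k] := Nat.modEq_zero_iff_dvd.mpr (add_comm u.1 u.2 ▸ hdvd)
      _ ≡ a k - i + i [MOD a k] := by
        rw [Nat.sub_add_cancel hi.le]
        exact (Nat.modEq_zero_iff_dvd.mpr dvd_rfl).symm
  obtain ⟨m, hm⟩ := exists_eq_leastModEq_add_mul h1 (Nat.mod_modEq u.1 (a k)).symm
  obtain ⟨n, hn⟩ := exists_eq_leastModEq_add_mul h2 h2i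
  refine ⟨i, hi, n, m, Prod.ext ?_ ?_⟩
  all_goals simp only [w, e, omega1_eq_leastModEq, omega2_eq_leastModEq, Prod.fst_add,
    Prod.snd_add, Prod.smul_mk, smul_eq_mul, Nat.sub_zero, Nat.sub_self, mul_zero, add_zero]
  · rw [hm, mul_comm]
  · rw [hn, mul_comm]

theorem mem_II_iff (ha0 : a 0 = 0) (hle : ∀ i ≤ k, a i ≤ a k) (hd : 0 < a k)
    (hgcd : (Icc 1 k).gcd a = 1) {i : ℕ} :
    i ∈ II k a ↔
      1 ≤ i ∧ i ≤ a k - 1 ∧ (∀ j, 1 ≤ j → j ≤ k - 1 → i ≠ a j) ∧ w k a i ∉ S k a := by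
  refine and_congr_right fun _ ↦ and_congr_right fun hi ↦ and_congr_right fun _ ↦ ?_
  rw [w_mem_S_iff_delta1 ha0 hle hd hgcd (by omega), not_le]

end Curve

theorem statement_1 (k : ℕ) (a : ℕ → ℕ) (hk : 3 ≤ k) (ha0 : a 0 = 0)
    (hmono : ∀ i, i < k → a i < a (i+1)) (hgcd : (Finset.Icc 1 k).gcd a = 1) :
    II k a = {i | 1 ≤ i ∧ i ≤ a k - 1 ∧ (∀ j, 1 ≤ j → j ≤ k - 1 → i ≠ a j) ∧
        deg k a (w k a i) < delta2 k a (w k a i).2} ∧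
    w k a '' II k a ⊆ S' k a \ S k a ∧
    S' k a \ S k a ⊆
      {u | ∃ i ∈ II k a, ∃ n m : ℕ, u = w k a i + n • e k a 0 + m • e k a (a k)} := by
  have hmono' : StrictMonoOn a (Set.Iic k) := strictMonoOn_Iic_of_lt_succ hmono
  have hle : ∀ i ≤ k, a i ≤ a k := fun i hi ↦ hmono'.monotoneOn hi (le_refl k) hi
  have hlt : ∀ j < k, a j < a k := fun j hj ↦ hmono' hj.le (le_refl k) hj
  have hpos : ∀ j, 1 ≤ j → j ≤ k → 0 < a j := fun j hj hjk ↦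
    ha0 ▸ hmono' (Nat.zero_le k) hjk (by omega)
  have hd : 0 < a k := hpos k (by omega) le_rfl
  have hII := fun {i} ↦ mem_II_iff (i := i) ha0 hle hd hgcd
  refine ⟨?_, ?_, ?_⟩
  · ext i
    rw [hII, Set.mem_ofPred_eq]
    refine and_congr_right fun _ ↦ and_congr_right fun hi ↦ and_congr_right fun _ ↦ ?_
    rw [w_mem_S_iff_delta2 ha0 hle hd hgcd (by omega), not_le]
  · rintro _ ⟨i, hi, rfl⟩
    obtain ⟨-, hi, -, hS⟩ := hII.mp hi
    exact ⟨w_mem_S' ha0 hle hd hgcd (by omega), hS⟩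
  · rintro u ⟨hS', hS⟩
    obtain ⟨i, hi, n, m, rfl⟩ := exists_eq_w_add_nsmul ha0 hle hd hS'
    have hw : w k a i ∉ S k a := fun hw ↦ hS (add_nsmul_e_mem_S ha0 hw n m)
    refine ⟨i, hII.mpr ⟨?_, by omega, ?_, hw⟩, n, m, rfl⟩
    · refine Nat.one_le_iff_ne_zero.mpr ?_
      rintro rfl
      exact hw (w_zero ▸ zero_mem (finSpan _ _))
    · rintro j hj hjk rfl
      have hj' : j < k := by omega
      exact hw (w_a_eq_e hj hj' (hpos j hj hj'.le) (hlt j hj') ▸ e_mem_S hj'.le)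

end ProjMonomialCurve
end

section
/- Write {a₀, a₁, …, a_k} = ⋃_{j=0}^r [b_{2j}, b_{2j+1}] as a disjoint union of intervals of consecutive integers, where 0 = b₀ ≤ b₁ < b₂ ≤ b₃ < ⋯ < b_{2r} ≤ b_{2r+1} = d and b_{2j−1} + 2 ≤ b_{2j} for j = 1,…,r, with r ≥ 1. Assume a₁ = 1. If there exists 1 ≤ j ≤ r such that b_{2j+1} − b_{2j−1} ≥ λ_k + 2, where λ_k = d − a_{k−1} − 1 is the last gap (possibly zero), then S′∖S ≠ ∅. -/
namespace ProjMonomialCurve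

private lemma sum_single_smul (k : ℕ) (a : ℕ → ℕ) (t' c : ℕ) (h : t' < k + 1) :
    (∑ t ∈ Finset.range (k+1), (if t = t' then c else 0) • e k a (a t)) = c • e k a (a t') := by
  rw [Finset.sum_eq_single_of_mem t' (Finset.mem_range.mpr h)]
  · rw [if_pos rfl]
  · intro t _ hne
    rw [if_neg hne, zero_smul]

private lemma memS3 (k : ℕ) (a : ℕ → ℕ) (t₁ t₂ t₃ c₁ c₂ c₃ : ℕ)
    (h₁ : t₁ < k+1) (h₂ : t₂ < k+1) (h₃ : t₃ < k+1) :
    c₁ • e k a (a t₁) + c₂ • e k a (a t₂) + c₃ • e k a (a t₃) ∈ S k a := by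
  refine ⟨fun t => (if t = t₁ then c₁ else 0) +
    ((if t = t₂ then c₂ else 0) + (if t = t₃ then c₃ else 0)), ?_⟩
  simp only [add_smul, Finset.sum_add_distrib, sum_single_smul k a _ _ h₁,
    sum_single_smul k a _ _ h₂, sum_single_smul k a _ _ h₃]
  rw [add_assoc]

theorem statement_6 (k : ℕ) (a : ℕ → ℕ) (hk : 3 ≤ k) (ha0 : a 0 = 0)
    (hmono : ∀ i, i < k → a i < a (i+1)) (hgcd : (Finset.Icc 1 k).gcd a = 1)
    (r : ℕ) (b : ℕ → ℕ) (hr : 1 ≤ r) (hb0 : b 0 = 0) (hbtop : b (2*r+1) = a k)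
    (hble : ∀ j ≤ r, b (2*j) ≤ b (2*j+1))
    (hblt : ∀ j, j < r → b (2*j+1) < b (2*j+2))
    (hgap2 : ∀ j, 1 ≤ j → j ≤ r → b (2*j-1) + 2 ≤ b (2*j))
    (hdecomp : A1set k a = ⋃ j ∈ Set.Iic r, Set.Icc (b (2*j)) (b (2*j+1)))
    (ha1 : a 1 = 1)
    (hj : ∃ j, 1 ≤ j ∧ j ≤ r ∧ b (2*j-1) + (a k - a (k-1) - 1) + 2 ≤ b (2*j+1)) :
    (S' k a \ S k a).Nonempty := by
  obtain ⟨j, hj1, hjr, hjb⟩ := hj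
  -- monotonicity of a
  have amono : ∀ s t, s ≤ t → t ≤ k → a s ≤ a t := by
    intro s t hst htk
    induction t, hst using Nat.le_induction with
    | base => exact le_rfl
    | succ t ht ih =>
      exact le_trans (ih (by omega)) (le_of_lt (hmono t (by omega)))
  -- monotonicity of b
  have bstep : ∀ s, s < 2*r+1 → b s ≤ b (s+1) := by
    intro s hs
    rcases Nat.even_or_odd s with ⟨m, hm⟩ | ⟨m, hm⟩
    · subst hm
      have h1 := hble m (by omega)
      have h2 : 2*m = m+m := by omega
      rw [h2] at h1
      exact h1
    · subst hm
      have h1 := (hblt m (by omega)).le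
      have h2 : 2*m+1+1 = 2*m+2 := by omega
      rw [h2]
      exact h1
  have bmono : ∀ s t, s ≤ t → t ≤ 2*r+1 → b s ≤ b t := by
    intro s t hst htk
    induction t, hst using Nat.le_induction with
    | base => exact le_rfl
    | succ t ht ih =>
      exact le_trans (ih (by omega)) (bstep t (by omega))
  have hak1 : a (k-1) < a k := by
    have h := hmono (k-1) (by omega)
    have h2 : k - 1 + 1 = k := by omega
    rwa [h2] at h
  set L := a k - a (k-1) - 1 with hLdef
  have hLd : a (k-1) + L + 1 = a k := by omega
  set z := max (b (2*j-1) + L + 2) (b (2*j)) with hzdef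
  have hz1 : b (2*j-1) + L + 2 ≤ z := le_max_left _ _
  have hz2 : b (2*j) ≤ z := le_max_right _ _
  have hz3 : z ≤ b (2*j+1) := max_le hjb (hble j hjr)
  have hzc : z = b (2*j-1) + L + 2 ∨ z = b (2*j) := max_choice _ _
  have hzd : z ≤ a k := by
    have h := bmono (2*j+1) (2*r+1) (by omega) le_rfl
    omega
  obtain ⟨i, hiz⟩ : ∃ i, z = i + L + 1 := ⟨z - (L+1), by omega⟩
  have hgap := hgap2 j hj1 hjr
  have hic : b (2*j-1) + 1 ≤ i := by omega
  have hib : i < b (2*j) := by omega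
  have hi1 : 1 ≤ i := by omega
  have hid : i ≤ a k := by omega
  have hd1 : 1 ≤ a k := by
    have := amono 1 k (by omega) le_rfl
    omega
  -- i is not in A1set
  have hiA : i ∉ A1set k a := by
    intro hmem
    rw [hdecomp] at hmem
    simp only [Set.mem_iUnion, Set.mem_Icc, Set.mem_Iic, exists_prop] at hmem
    obtain ⟨j', hj'r, hlo, hhi⟩ := hmem
    by_cases hlt : j' < j
    · have h := bmono (2*j'+1) (2*j-1) (by omega) (by omega)
      omega
    · have h := bmono (2*j) (2*j') (by omega) (by omega)
      omega
  -- z is in A1set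
  have hzA : z ∈ A1set k a := by
    rw [hdecomp]
    simp only [Set.mem_iUnion, Set.mem_Icc, Set.mem_Iic, exists_prop]
    exact ⟨j, hjr, hz2, hz3⟩
  obtain ⟨ℓ, hℓk, hℓz⟩ := hzA
  refine ⟨(i, a k - i), ⟨?_, ?_⟩⟩
  · -- membership in S'
    refine ⟨i, ?_, ?_⟩
    · -- (i, a k - i) + i • e k a 0 ∈ S
      have hmem := memS3 k a 0 1 k 1 i 0 (by omega) (by omega) (by omega)
      have heq : ((i, a k - i) : ℕ × ℕ) + i • e k a 0
          = 1 • e k a (a 0) + i • e k a (a 1) + 0 • e k a (a k) := by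
        simp only [e, ha0, ha1, Nat.sub_zero, Nat.sub_self, Prod.smul_mk, Prod.mk_add_mk,
          smul_eq_mul, Prod.mk.injEq]
        constructor
        · omega
        · zify [hid, hd1]
          ring
      rw [heq]
      exact hmem
    · -- (i, a k - i) + i • e k a (a k) ∈ S
      have hmem := memS3 k a ℓ (k-1) k 1 1 (i-1) (by omega) (by omega) (by omega)
      have hze : (a ℓ : ℤ) = (i : ℤ) + L + 1 := by
        have : a ℓ = i + L + 1 := by omega
        exact_mod_cast this
      have hke : (a (k-1) : ℤ) + L + 1 = a k := by exact_mod_cast hLd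
      have hℓd : a ℓ ≤ a k := by omega
      have hkd : a (k-1) ≤ a k := hak1.le
      have heq : ((i, a k - i) : ℕ × ℕ) + i • e k a (a k)
          = 1 • e k a (a ℓ) + 1 • e k a (a (k-1)) + (i-1) • e k a (a k) := by
        simp only [e, Nat.sub_self, mul_zero, Prod.smul_mk, Prod.mk_add_mk, smul_eq_mul,
          Prod.mk.injEq, one_mul, add_zero]
        constructor
        · zify [hid, hi1]
          linarith [hze, hke]
        · zify [hid, hℓd, hkd]
          linarith [hze, hke]
      rw [heq]
      exact hmem
  · -- not in S
    rintro ⟨x, hx⟩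
    have h1 : i = ∑ t ∈ Finset.range (k+1), x t * a t := by
      have h := congrArg Prod.fst hx
      simpa only [Prod.fst_sum, e, Prod.smul_mk, smul_eq_mul] using h
    have h2 : a k - i = ∑ t ∈ Finset.range (k+1), x t * (a k - a t) := by
      have h := congrArg Prod.snd hx
      simpa only [Prod.snd_sum, e, Prod.smul_mk, smul_eq_mul] using h
    have hsum : ∑ t ∈ Finset.range (k+1), x t * a k = a k := by
      have hstep : ∑ t ∈ Finset.range (k+1), x t * a k
          = ∑ t ∈ Finset.range (k+1), (x t * a t + x t * (a k - a t)) := by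
        refine Finset.sum_congr rfl (fun t ht => ?_)
        have hta : a t ≤ a k := amono t k (by
          have := Finset.mem_range.mp ht; omega) le_rfl
        rw [← Nat.mul_add, Nat.add_sub_cancel' hta]
      rw [hstep, Finset.sum_add_distrib, ← h1, ← h2]
      omega
    have hone : ∑ t ∈ Finset.range (k+1), x t = 1 := by
      have h := Finset.sum_mul (Finset.range (k+1)) x (a k)
      rw [hsum] at h
      have : (∑ t ∈ Finset.range (k+1), x t) * a k = 1 * a k := by omega
      exact Nat.eq_of_mul_eq_mul_right (by omega) this
    obtain ⟨t₀, ht₀mem, ht₀⟩ := Finset.exists_ne_zero_of_sum_ne_zero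
      (f := x) (s := Finset.range (k+1)) (by omega)
    have hadd := Finset.add_sum_erase (Finset.range (k+1)) x ht₀mem
    have hrest : ∀ t ∈ (Finset.range (k+1)).erase t₀, x t = 0 := by
      intro t ht
      have hle := Finset.single_le_sum (f := x)
        (fun _ _ => Nat.zero_le _) ht
      omega
    have hx0 : x t₀ = 1 := by
      have hz2' : ∑ t ∈ (Finset.range (k+1)).erase t₀, x t = 0 :=
        Finset.sum_eq_zero hrest
      omega
    have hadd2 := Finset.add_sum_erase (Finset.range (k+1))
      (fun t => x t * a t) ht₀mem
    have hz3' : ∑ t ∈ (Finset.range (k+1)).erase t₀, x t * a t = 0 :=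
      Finset.sum_eq_zero (fun t ht => by rw [hrest t ht, zero_mul])
    simp only [hx0, one_mul, hz3', add_zero] at hadd2
    have hieq : i = a t₀ := by omega
    exact hiA ⟨t₀, by
      have := Finset.mem_range.mp ht₀mem
      omega, hieq.symm⟩

end ProjMonomialCurve
end
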